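/- arXiv:2310.08058 — 2 statements merged into one kernel-verified Lean document; each statement's English description precedes it below -/
import Mathlib

section
/- In two-dimensional Minkowski space-time (ℝ², with metric g = dy² − dx²), for every constant c < 0 the function u_c(x,y) = |x − c| + c is a viscosity solution of the timelike eikonal equation g(∇u, ∇u) = −1 on the half-space {(x,y) : x < 0} with boundary condition u = 0 on the line {x = 0}. In particular, the Cauchy problem for the eikonal equation with zero initial data on a Cauchy surface does not have a unique viscosity solution without a time-orientation condition. -/
/-- Minkowski form on ℝ² = EuclideanSpace ℝ (Fin 2): g = dy² − dx²,
with coordinates (x,y) = (v 0, v 1). -/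
def mink2 (v w : EuclideanSpace ℝ (Fin 2)) : ℝ := v 1 * w 1 - v 0 * w 0

/-- `v` is a (Fréchet) supergradient of `f` at `p`. -/
def IsSuperGradAt2 (f : EuclideanSpace ℝ (Fin 2) → ℝ) (p v : EuclideanSpace ℝ (Fin 2)) : Prop :=
  ∀ ε > (0:ℝ), ∃ δ > (0:ℝ), ∀ y, ‖y - p‖ < δ →
    f y ≤ f p + (inner ℝ v (y - p) : ℝ) + ε * ‖y - p‖

/-- `v` is a (Fréchet) subgradient of `f` at `p`. -/
def IsSubGradAt2 (f : EuclideanSpace ℝ (Fin 2) → ℝ) (p v : EuclideanSpace ℝ (Fin 2)) : Prop :=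
  ∀ ε > (0:ℝ), ∃ δ > (0:ℝ), ∀ y, ‖y - p‖ < δ →
    f y ≥ f p + (inner ℝ v (y - p) : ℝ) - ε * ‖y - p‖

/-- `u` is a viscosity solution of g(∇u,∇u) = −1 on `U`. -/
def IsViscositySol2 (u : EuclideanSpace ℝ (Fin 2) → ℝ) (U : Set (EuclideanSpace ℝ (Fin 2))) : Prop :=
  ∀ p ∈ U, (∀ v, IsSuperGradAt2 u p v → mink2 v v ≤ -1) ∧
           (∀ v, IsSubGradAt2 u p v → mink2 v v ≥ -1)

lemma super_dir (f : EuclideanSpace ℝ (Fin 2) → ℝ) (p v w : EuclideanSpace ℝ (Fin 2))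
    (hw : ‖w‖ = 1) (h : IsSuperGradAt2 f p v) (d r : ℝ) (hr : 0 < r)
    (hf : ∀ t : ℝ, 0 < t → t < r → f (p + t • w) = f p + d * t) :
    d ≤ (inner ℝ v w : ℝ) := by
  refine le_of_forall_pos_le_add (fun ε hε => ?_)
  obtain ⟨δ, hδ, H⟩ := h ε hε
  set t := min r δ / 2 with htdef
  have ht : 0 < t := by positivity
  have hmin : 0 < min r δ := lt_min hr hδ
  have h1 : t < r := (half_lt_self hmin).trans_le (min_le_left _ _)
  have h2 : t < δ := (half_lt_self hmin).trans_le (min_le_right _ _)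
  have hnorm : ‖(p + t • w) - p‖ = t := by
    simp [norm_smul, hw, abs_of_pos ht]
  have hy := H (p + t • w) (by rw [hnorm]; exact h2)
  rw [hf t ht h1, hnorm] at hy
  have hsub : (p + t • w) - p = t • w := by abel
  rw [hsub, real_inner_smul_right] at hy
  have := (mul_le_mul_iff_of_pos_right ht).mp (by linarith [hy] : d * t ≤ ((inner ℝ v w : ℝ) + ε) * t)
  linarith

lemma sub_dir (f : EuclideanSpace ℝ (Fin 2) → ℝ) (p v w : EuclideanSpace ℝ (Fin 2))
    (hw : ‖w‖ = 1) (h : IsSubGradAt2 f p v) (d r : ℝ) (hr : 0 < r)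
    (hf : ∀ t : ℝ, 0 < t → t < r → f (p + t • w) = f p + d * t) :
    (inner ℝ v w : ℝ) ≤ d := by
  refine le_of_forall_pos_le_add (fun ε hε => ?_)
  obtain ⟨δ, hδ, H⟩ := h ε hε
  set t := min r δ / 2 with htdef
  have ht : 0 < t := by positivity
  have hmin : 0 < min r δ := lt_min hr hδ
  have h1 : t < r := (half_lt_self hmin).trans_le (min_le_left _ _)
  have h2 : t < δ := (half_lt_self hmin).trans_le (min_le_right _ _)
  have hnorm : ‖(p + t • w) - p‖ = t := by
    simp [norm_smul, hw, abs_of_pos ht]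
  have hy := H (p + t • w) (by rw [hnorm]; exact h2)
  rw [hf t ht h1, hnorm] at hy
  have hsub : (p + t • w) - p = t • w := by abel
  rw [hsub, real_inner_smul_right] at hy
  have := (mul_le_mul_iff_of_pos_right ht).mp (by linarith [hy] : (inner ℝ v w : ℝ) * t ≤ (d + ε) * t)
  linarith

lemma inner_single (v : EuclideanSpace ℝ (Fin 2)) (i : Fin 2) :
    (inner ℝ v (EuclideanSpace.single i (1:ℝ)) : ℝ) = v i := by
  rw [real_inner_comm, EuclideanSpace.inner_single_left]
  simp

lemma eval_add_smul (p : EuclideanSpace ℝ (Fin 2)) (t : ℝ) (i j : Fin 2) :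
    (p + t • EuclideanSpace.single i (1:ℝ)) j = p j + (if i = j then t else 0) := by
  rcases eq_or_ne i j with rfl | h
  · simp [EuclideanSpace.single_apply]
  · simp [EuclideanSpace.single_apply, h, Ne.symm h]

lemma eval_add_smul_neg (p : EuclideanSpace ℝ (Fin 2)) (t : ℝ) (i j : Fin 2) :
    (p + t • -EuclideanSpace.single i (1:ℝ)) j = p j - (if i = j then t else 0) := by
  rcases eq_or_ne i j with rfl | h
  · simp [EuclideanSpace.single_apply, sub_eq_add_neg]
  · simp [EuclideanSpace.single_apply, h, Ne.symm h]

/-- For every c < 0, u_c(x,y) = |x − c| + c is a viscosity solution of the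
timelike eikonal equation on {x < 0} with u_c = 0 on the line {x = 0}. -/
theorem stmt0 (c : ℝ) (hc : c < 0) :
    IsViscositySol2 (fun p => |p 0 - c| + c) {p | p 0 < 0} ∧
    ∀ p : EuclideanSpace ℝ (Fin 2), p 0 = 0 → |p 0 - c| + c = 0 := by
  refine ⟨?_, ?_⟩
  set f : EuclideanSpace ℝ (Fin 2) → ℝ := fun p => |p 0 - c| + c with hf
  · intro p _
    set e0 : EuclideanSpace ℝ (Fin 2) := EuclideanSpace.single 0 (1:ℝ)
    set e1 : EuclideanSpace ℝ (Fin 2) := EuclideanSpace.single 1 (1:ℝ)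
    have he0 : ‖e0‖ = 1 := by simp [e0]
    have he1 : ‖e1‖ = 1 := by simp [e1]
    have hne0 : ‖-e0‖ = 1 := by rw [norm_neg]; exact he0
    have hne1 : ‖-e1‖ = 1 := by rw [norm_neg]; exact he1
    -- evaluation lemmas
    have Hp0 : ∀ t : ℝ, f (p + t • e0) = |p 0 - c + t| + c := by
      intro t; simp [hf, eval_add_smul, e0]; ring_nf
    have Hn0 : ∀ t : ℝ, f (p + t • -e0) = |p 0 - c - t| + c := by
      intro t; simp [hf, eval_add_smul_neg, e0]; ring_nf
    have Hp1 : ∀ t : ℝ, f (p + t • e1) = f p := by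
      intro t; simp [hf, eval_add_smul, e1]
    have Hn1 : ∀ t : ℝ, f (p + t • -e1) = f p := by
      intro t; simp [hf, eval_add_smul_neg, e1]
    set x := p 0 - c with hx
    constructor
    · -- supergradients
      intro v hv
      -- vertical direction: v 1 = 0
      have hv1a : (0:ℝ) ≤ v 1 := by
        have := super_dir f p v e1 he1 hv 0 1 one_pos
          (fun t _ _ => by rw [Hp1]; ring)
        rwa [inner_single] at this
      have hv1b : (0:ℝ) ≤ -(v 1) := by
        have := super_dir f p v (-e1) hne1 hv 0 1 one_pos
          (fun t _ _ => by rw [Hn1]; ring)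
        rwa [inner_neg_right, inner_single] at this
      have hv1 : v 1 = 0 := by linarith
      rcases lt_trichotomy x 0 with hxs | hxs | hxs
      · -- x < 0 : slope -1
        have ha : (-1:ℝ) ≤ v 0 := by
          have := super_dir f p v e0 he0 hv (-1) (-x) (by linarith)
            (fun t ht htr => by
              rw [Hp0]
              have : |x + t| = -(x + t) := abs_of_neg (by linarith)
              simp only [hf]
              rw [this]
              have hxp : |p 0 - c| = -(p 0 - c) := abs_of_neg (by linarith [hxs])
              rw [hxp]; ring)
          rwa [inner_single] at this
        have hb : (1:ℝ) ≤ -(v 0) := by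
          have := super_dir f p v (-e0) hne0 hv 1 (-x) (by linarith)
            (fun t ht htr => by
              rw [Hn0]
              have : |x - t| = -(x - t) := abs_of_neg (by linarith)
              rw [this]
              have hxp : |p 0 - c| = -(p 0 - c) := abs_of_neg (by linarith [hxs])
              simp only [hf]; rw [hxp]; ring)
          rwa [inner_neg_right, inner_single] at this
        have hv0 : v 0 = -1 := by linarith
        simp [mink2, hv0, hv1]
      · -- x = 0 : no supergradient, contradiction
        exfalso
        have ha : (1:ℝ) ≤ v 0 := by
          have := super_dir f p v e0 he0 hv 1 1 one_pos
            (fun t ht htr => by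
              rw [Hp0]
              have : |x + t| = x + t := abs_of_pos (by linarith)
              rw [this]
              have hxp : |p 0 - c| = p 0 - c := by rw [← hx, hxs]; simp
              simp only [hf]; rw [hxp]; rw [← hx, hxs]; ring)
          rwa [inner_single] at this
        have hb : (1:ℝ) ≤ -(v 0) := by
          have := super_dir f p v (-e0) hne0 hv 1 1 one_pos
            (fun t ht htr => by
              rw [Hn0]
              have : |x - t| = -(x - t) := abs_of_neg (by linarith)
              rw [this]
              have hxp : |p 0 - c| = p 0 - c := by rw [← hx, hxs]; simp
              simp only [hf]; rw [hxp]; rw [← hx, hxs]; ring)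
          rwa [inner_neg_right, inner_single] at this
        linarith
      · -- x > 0 : slope 1
        have ha : (1:ℝ) ≤ v 0 := by
          have := super_dir f p v e0 he0 hv 1 x hxs
            (fun t ht htr => by
              rw [Hp0]
              have : |x + t| = x + t := abs_of_pos (by linarith)
              rw [this]
              have hxp : |p 0 - c| = p 0 - c := abs_of_pos (by linarith [hxs])
              simp only [hf]; rw [hxp]; ring)
          rwa [inner_single] at this
        have hb : (-1:ℝ) ≤ -(v 0) := by
          have := super_dir f p v (-e0) hne0 hv (-1) x hxs
            (fun t ht htr => by
              rw [Hn0]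
              have : |x - t| = x - t := abs_of_pos (by linarith)
              rw [this]
              have hxp : |p 0 - c| = p 0 - c := abs_of_pos (by linarith [hxs])
              simp only [hf]; rw [hxp]; ring)
          rwa [inner_neg_right, inner_single] at this
        have hv0 : v 0 = 1 := by linarith
        simp [mink2, hv0, hv1]
    · -- subgradients
      intro v hv
      have key : -1 ≤ v 0 ∧ v 0 ≤ 1 := by
        rcases lt_trichotomy x 0 with hxs | hxs | hxs
        · have ha : v 0 ≤ -1 := by
            have := sub_dir f p v e0 he0 hv (-1) (-x) (by linarith)
              (fun t ht htr => by
                rw [Hp0]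
                have : |x + t| = -(x + t) := abs_of_neg (by linarith)
                rw [this]
                have hxp : |p 0 - c| = -(p 0 - c) := abs_of_neg (by linarith [hxs])
                simp only [hf]; rw [hxp]; ring)
            rwa [inner_single] at this
          have hb : -(v 0) ≤ 1 := by
            have := sub_dir f p v (-e0) hne0 hv 1 (-x) (by linarith)
              (fun t ht htr => by
                rw [Hn0]
                have : |x - t| = -(x - t) := abs_of_neg (by linarith)
                rw [this]
                have hxp : |p 0 - c| = -(p 0 - c) := abs_of_neg (by linarith [hxs])
                simp only [hf]; rw [hxp]; ring)
            rwa [inner_neg_right, inner_single] at this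
          constructor <;> linarith
        · have ha : v 0 ≤ 1 := by
            have := sub_dir f p v e0 he0 hv 1 1 one_pos
              (fun t ht htr => by
                rw [Hp0]
                have : |x + t| = x + t := abs_of_pos (by linarith)
                rw [this]
                have hxp : |p 0 - c| = p 0 - c := by rw [← hx, hxs]; simp
                simp only [hf]; rw [hxp]; rw [← hx, hxs]; ring)
            rwa [inner_single] at this
          have hb : -(v 0) ≤ 1 := by
            have := sub_dir f p v (-e0) hne0 hv 1 1 one_pos
              (fun t ht htr => by
                rw [Hn0]
                have : |x - t| = -(x - t) := abs_of_neg (by linarith)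
                rw [this]
                have hxp : |p 0 - c| = p 0 - c := by rw [← hx, hxs]; simp
                simp only [hf]; rw [hxp]; rw [← hx, hxs]; ring)
            rwa [inner_neg_right, inner_single] at this
          constructor <;> linarith
        · have ha : v 0 ≤ 1 := by
            have := sub_dir f p v e0 he0 hv 1 x hxs
              (fun t ht htr => by
                rw [Hp0]
                have : |x + t| = x + t := abs_of_pos (by linarith)
                rw [this]
                have hxp : |p 0 - c| = p 0 - c := abs_of_pos (by linarith [hxs])
                simp only [hf]; rw [hxp]; ring)
            rwa [inner_single] at this
          have hb : -(v 0) ≤ -1 := by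
            have := sub_dir f p v (-e0) hne0 hv (-1) x hxs
              (fun t ht htr => by
                rw [Hn0]
                have : |x - t| = x - t := abs_of_pos (by linarith)
                rw [this]
                have hxp : |p 0 - c| = p 0 - c := abs_of_pos (by linarith [hxs])
                simp only [hf]; rw [hxp]; ring)
            rwa [inner_neg_right, inner_single] at this
          constructor <;> linarith
      obtain ⟨h1, h2⟩ := key
      have : mink2 v v = v 1 * v 1 - v 0 * v 0 := rfl
      rw [ge_iff_le, this]
      nlinarith [sq_nonneg (v 1)]
  · intro p hp
    have : |p 0 - c| = p 0 - c := abs_of_pos (by rw [hp]; linarith)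
    rw [this, hp]; ring
end

section
/- Let f : U → ℝ be continuous on an open convex set U ⊂ ℝⁿ and C > 0. Suppose for every p ∈ U there exists a function f_p, C² on a neighborhood of p contained in U, with f_p(p) = f(p), f_p ≥ f on its domain, and D²f_p ≤ C·I on its domain (as quadratic forms). Then x ↦ f(x) − (C/2)‖x‖² is concave on U; in particular, f is semiconcave with constant C on U. -/
open Set
open scoped RealInnerProductSpace

/-- A function with negative second derivative near `t₀` has no local min at `t₀`. -/
lemma no_local_min {ψ dψ : ℝ → ℝ} {t₀ ε : ℝ} (hε : 0 < ε)
    (hd : ∀ s ∈ Ioo (t₀ - ε) (t₀ + ε), HasDerivAt ψ (dψ s) s)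
    (hdd : ∀ s ∈ Ioo (t₀ - ε) (t₀ + ε), ∃ d, HasDerivAt dψ d s ∧ d < 0)
    (hmin : IsLocalMin ψ t₀) : False := by
  have ht₀ : t₀ ∈ Ioo (t₀ - ε) (t₀ + ε) := ⟨by linarith, by linarith⟩
  have h0 : dψ t₀ = 0 := by
    have h := hmin.deriv_eq_zero
    rwa [(hd t₀ ht₀).deriv] at h
  have hsub : Icc t₀ (t₀ + ε / 2) ⊆ Ioo (t₀ - ε) (t₀ + ε) := fun s hs =>
    ⟨by linarith [hs.1], by linarith [hs.2]⟩
  have hanti1 : StrictAntiOn dψ (Icc t₀ (t₀ + ε / 2)) := by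
    apply strictAntiOn_of_deriv_neg (convex_Icc _ _)
    · intro s hs
      obtain ⟨d, hdd', _⟩ := hdd s (hsub hs)
      exact hdd'.continuousAt.continuousWithinAt
    · intro s hs
      rw [interior_Icc] at hs
      obtain ⟨d, hdd', hdneg⟩ := hdd s (hsub (Ioo_subset_Icc_self hs))
      rwa [hdd'.deriv]
  have hneg : ∀ s ∈ Ioo t₀ (t₀ + ε / 2), dψ s < 0 := by
    intro s hs
    have := hanti1 ⟨le_refl _, by linarith⟩ ⟨hs.1.le, hs.2.le⟩ hs.1
    rwa [h0] at this
  have hanti2 : StrictAntiOn ψ (Icc t₀ (t₀ + ε / 2)) := by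
    apply strictAntiOn_of_deriv_neg (convex_Icc _ _)
    · intro s hs
      exact (hd s (hsub hs)).continuousAt.continuousWithinAt
    · intro s hs
      rw [interior_Icc] at hs
      rw [(hd s (hsub (Ioo_subset_Icc_self hs))).deriv]
      exact hneg s hs
  obtain ⟨η, hη, hloc⟩ := Metric.eventually_nhds_iff.1 hmin
  set s := t₀ + min η (ε / 2) / 2 with hs_def
  have hmpos : 0 < min η (ε / 2) := lt_min hη (by linarith)
  have hst : t₀ < s := by simp only [hs_def]; linarith
  have hs2 : s ≤ t₀ + ε / 2 := by
    have := min_le_right η (ε / 2); simp only [hs_def]; linarith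
  have hdist : dist s t₀ < η := by
    have := min_le_left η (ε / 2)
    rw [Real.dist_eq]
    simp only [hs_def]
    rw [abs_of_pos (by linarith)]
    linarith
  have h1 : ψ t₀ ≤ ψ s := hloc hdist
  have h2 : ψ s < ψ t₀ :=
    hanti2 ⟨le_refl _, by linarith⟩ ⟨hst.le, hs2⟩ hst
  linarith

lemma key_lemma (n : ℕ) (U : Set (EuclideanSpace ℝ (Fin n)))
    (hUopen : IsOpen U) (hUconv : Convex ℝ U)
    (f : EuclideanSpace ℝ (Fin n) → ℝ) (hf : ContinuousOn f U)
    (C : ℝ)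
    (hsupp : ∀ p ∈ U, ∃ O : Set (EuclideanSpace ℝ (Fin n)),
      IsOpen O ∧ p ∈ O ∧ O ⊆ U ∧
      ∃ fp : EuclideanSpace ℝ (Fin n) → ℝ,
        ContDiffOn ℝ 2 fp O ∧ fp p = f p ∧ (∀ x ∈ O, f x ≤ fp x) ∧
        ∀ x ∈ O, ∀ v, (iteratedFDeriv ℝ 2 fp x) ![v, v] ≤ C * ‖v‖ ^ 2)
    (δ : ℝ) (hδ : 0 < δ) (x y : EuclideanSpace ℝ (Fin n)) (hx : x ∈ U) (hy : y ∈ U)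
    (t : ℝ) (ht : t ∈ Icc (0:ℝ) 1) :
    (1 - t) * (f x - (C + δ)/2 * ⟪x, x⟫) + t * (f y - (C + δ)/2 * ⟪y, y⟫) ≤
      f (x + t • (y - x)) - (C + δ)/2 * ⟪x + t • (y - x), x + t • (y - x)⟫ := by
  rcases eq_or_ne x y with rfl | hxy
  · simp only [sub_self, smul_zero, add_zero]
    have h : (1 - t) * (f x - (C + δ)/2 * ⟪x, x⟫) + t * (f x - (C + δ)/2 * ⟪x, x⟫)
        = f x - (C + δ)/2 * ⟪x, x⟫ := by ring
    rw [h]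
  set c2 := (C + δ)/2 with hc2
  set v := y - x with hv_def
  have hv : v ≠ 0 := sub_ne_zero_of_ne (Ne.symm hxy)
  set γ : ℝ → EuclideanSpace ℝ (Fin n) := fun s => x + s • v with hγ_def
  have hrepr : ∀ s : ℝ, γ s = (1 - s) • x + s • y := by
    intro s; simp only [hγ_def, hv_def]; module
  have hγU : ∀ s ∈ Icc (0:ℝ) 1, γ s ∈ U := by
    intro s hs
    rw [hrepr]
    exact hUconv hx hy (by linarith [hs.2]) hs.1 (by ring)
  have hγcont : Continuous γ := by fun_prop
  have hγ' : ∀ s : ℝ, HasDerivAt γ v s := by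
    intro s
    have h := ((hasDerivAt_id s).smul_const v).const_add x
    simpa [hγ_def] using h
  set A := f x - c2 * ⟪x, x⟫ with hA
  set B := f y - c2 * ⟪y, y⟫ with hB
  set F : ℝ → ℝ := fun s => f (γ s) - c2 * ⟪γ s, γ s⟫ - ((1 - s) * A + s * B) with hF_def
  have hγ0 : γ 0 = x := by simp [hγ_def]
  have hγ1 : γ 1 = y := by simp [hγ_def, hv_def]
  have hF0 : F 0 = 0 := by
    simp only [hF_def]; rw [hγ0, hA]; ring
  have hF1 : F 1 = 0 := by
    simp only [hF_def]; rw [hγ1, hB]; ring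
  have hFcont : ContinuousOn F (Icc 0 1) := by
    apply ContinuousOn.sub
    apply ContinuousOn.sub
    · exact hf.comp hγcont.continuousOn (fun s hs => hγU s hs)
    · exact (continuous_const.mul (hγcont.inner hγcont)).continuousOn
    · fun_prop
  -- goal reduces to 0 ≤ F t
  have hFt : F t = f (x + t • v) - c2 * ⟪x + t • v, x + t • v⟫ - ((1 - t) * A + t * B) := rfl
  suffices h : 0 ≤ F t by
    rw [hFt] at h
    linarith
  by_contra hneg
  push_neg at hneg
  obtain ⟨t₀, ht₀, hmin⟩ := isCompact_Icc.exists_isMinOn (nonempty_Icc.2 zero_le_one) hFcont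
  have hFt₀ : F t₀ < 0 := lt_of_le_of_lt (hmin ht) hneg
  have ht₀0 : t₀ ≠ 0 := fun h => by rw [h, hF0] at hFt₀; linarith
  have ht₀1 : t₀ ≠ 1 := fun h => by rw [h, hF1] at hFt₀; linarith
  have ht₀oo : t₀ ∈ Ioo (0:ℝ) 1 :=
    ⟨lt_of_le_of_ne ht₀.1 (Ne.symm ht₀0), lt_of_le_of_ne ht₀.2 ht₀1⟩
  have hpU : γ t₀ ∈ U := hγU t₀ ht₀
  obtain ⟨O, hOopen, hpO, hOU, fp, hfp, hfpp, hfpge, hhess⟩ := hsupp (γ t₀) hpU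
  obtain ⟨ε₁, hε₁, hball⟩ := Metric.isOpen_iff.1 (hOopen.preimage hγcont) t₀ hpO
  set ε := min ε₁ (min t₀ (1 - t₀)) with hε_def
  have hεpos : 0 < ε := lt_min hε₁ (lt_min ht₀oo.1 (by linarith [ht₀oo.2]))
  have hIoosub : ∀ s ∈ Ioo (t₀ - ε) (t₀ + ε), γ s ∈ O ∧ s ∈ Ioo (0:ℝ) 1 := by
    intro s hs
    have h1 : ε ≤ ε₁ := min_le_left _ _
    have h2 : ε ≤ t₀ := le_trans (min_le_right _ _) (min_le_left _ _)
    have h3 : ε ≤ 1 - t₀ := le_trans (min_le_right _ _) (min_le_right _ _)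
    constructor
    · apply hball
      rw [Metric.mem_ball, Real.dist_eq, abs_lt]
      constructor <;> [linarith [hs.1]; linarith [hs.2]]
    · exact ⟨by linarith [hs.1], by linarith [hs.2]⟩
  set ψ : ℝ → ℝ := fun s => fp (γ s) - c2 * ⟪γ s, γ s⟫ - ((1 - s) * A + s * B) with hψ_def
  set dψ : ℝ → ℝ := fun s =>
    fderiv ℝ fp (γ s) v - c2 * (⟪γ s, v⟫ + ⟪v, γ s⟫) - ((0 - 1) * A + 1 * B) with hdψ_def
  have hCAt : ∀ s ∈ Ioo (t₀ - ε) (t₀ + ε), ContDiffAt ℝ 2 fp (γ s) := by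
    intro s hs
    exact hfp.contDiffAt (hOopen.mem_nhds (hIoosub s hs).1)
  have haff : ∀ s : ℝ, HasDerivAt (fun s : ℝ => (1 - s) * A + s * B) ((0 - 1) * A + 1 * B) s := by
    intro s
    exact (((hasDerivAt_const s (1:ℝ)).sub (hasDerivAt_id s)).mul_const A).add
      ((hasDerivAt_id s).mul_const B)
  have hdψ1 : ∀ s ∈ Ioo (t₀ - ε) (t₀ + ε), HasDerivAt ψ (dψ s) s := by
    intro s hs
    have h1 : HasDerivAt (fun s => fp (γ s)) (fderiv ℝ fp (γ s) v) s :=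
      (((hCAt s hs).differentiableAt (by norm_num)).hasFDerivAt).comp_hasDerivAt s (hγ' s)
    have h2 : HasDerivAt (fun s => ⟪γ s, γ s⟫) (⟪γ s, v⟫ + ⟪v, γ s⟫) s :=
      HasDerivAt.inner ℝ (hγ' s) (hγ' s)
    exact (h1.sub (h2.const_mul c2)).sub (haff s)
  have hdψ2 : ∀ s ∈ Ioo (t₀ - ε) (t₀ + ε), ∃ d, HasDerivAt dψ d s ∧ d < 0 := by
    intro s hs
    have hCs := hCAt s hs
    have hd2 : DifferentiableAt ℝ (fderiv ℝ fp) (γ s) :=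
      (hCs.fderiv_right (m := 1) (by norm_num)).differentiableAt (by norm_num)
    have h3 : HasDerivAt (fun s => fderiv ℝ fp (γ s)) (fderiv ℝ (fderiv ℝ fp) (γ s) v) s :=
      hd2.hasFDerivAt.comp_hasDerivAt s (hγ' s)
    have h4 : HasDerivAt (fun s => fderiv ℝ fp (γ s) v)
        (fderiv ℝ (fderiv ℝ fp) (γ s) v v) s := by
      simpa using h3.clm_apply (hasDerivAt_const s v)
    have h5 : HasDerivAt (fun s => ⟪γ s, v⟫ + ⟪v, γ s⟫) (⟪v, v⟫ + ⟪v, v⟫) s := by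
      have ha := HasDerivAt.inner ℝ (hγ' s) (hasDerivAt_const s v)
      have hb := HasDerivAt.inner ℝ (hasDerivAt_const s v) (hγ' s)
      have h := ha.add hb
      simp only [inner_zero_left, inner_zero_right, add_zero, zero_add] at h
      exact h
    refine ⟨fderiv ℝ (fderiv ℝ fp) (γ s) v v - c2 * (⟪v, v⟫ + ⟪v, v⟫), ?_, ?_⟩
    · have h6 := (h4.sub (h5.const_mul c2)).sub (hasDerivAt_const s ((0 - 1) * A + 1 * B))
      rw [sub_zero] at h6
      exact h6
    · have hb : fderiv ℝ (fderiv ℝ fp) (γ s) v v ≤ C * ‖v‖ ^ 2 := by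
        have hh := hhess (γ s) (hIoosub s hs).1 v
        rwa [iteratedFDeriv_two_apply] at hh
      have hvv : ⟪v, v⟫ = ‖v‖ ^ 2 := real_inner_self_eq_norm_sq v
      have hvpos : 0 < ‖v‖ ^ 2 := pow_pos (norm_pos_iff.mpr hv) 2
      rw [hvv, hc2]
      nlinarith
  have hlocmin : IsLocalMin ψ t₀ := by
    have hnhds : Ioo (t₀ - ε) (t₀ + ε) ∈ nhds t₀ :=
      Ioo_mem_nhds (by linarith) (by linarith)
    filter_upwards [hnhds] with s hs
    have h1 : F s ≤ ψ s := by
      simp only [hF_def, hψ_def]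
      have := hfpge (γ s) (hIoosub s hs).1
      linarith
    have h2 : F t₀ ≤ F s := hmin (Ioo_subset_Icc_self (hIoosub s hs).2)
    have h3 : ψ t₀ = F t₀ := by simp only [hF_def, hψ_def, hfpp]
    rw [h3]
    linarith
  exact no_local_min hεpos hdψ1 hdψ2 hlocmin

/-- Lemma 3.2 of Andersson–Galloway–Howard: if a continuous f on an open convex
set U admits at each point p an upper support function f_p of class C² with
Hessian ≤ C·I, then f − (C/2)‖·‖² is concave on U (f is C-semiconcave). -/
theorem stmt5 (n : ℕ) (U : Set (EuclideanSpace ℝ (Fin n)))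
    (hUopen : IsOpen U) (hUconv : Convex ℝ U)
    (f : EuclideanSpace ℝ (Fin n) → ℝ) (hf : ContinuousOn f U)
    (C : ℝ) (hC : 0 < C)
    (hsupp : ∀ p ∈ U, ∃ O : Set (EuclideanSpace ℝ (Fin n)),
      IsOpen O ∧ p ∈ O ∧ O ⊆ U ∧
      ∃ fp : EuclideanSpace ℝ (Fin n) → ℝ,
        ContDiffOn ℝ 2 fp O ∧ fp p = f p ∧ (∀ x ∈ O, f x ≤ fp x) ∧
        ∀ x ∈ O, ∀ v, (iteratedFDeriv ℝ 2 fp x) ![v, v] ≤ C * ‖v‖ ^ 2) :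
    ConcaveOn ℝ U (fun x => f x - C / 2 * ‖x‖ ^ 2) := by
  refine ⟨hUconv, fun x hx y hy a b ha hb hab => ?_⟩
  simp only [smul_eq_mul]
  have hb1 : b ≤ 1 := by linarith
  have ha1 : a = 1 - b := by linarith
  have hz : a • x + b • y = x + b • (y - x) := by rw [ha1]; module
  set z := a • x + b • y with hz_def
  have hkey : ∀ δ : ℝ, 0 < δ →
      a * (f x - (C + δ)/2 * ‖x‖^2) + b * (f y - (C + δ)/2 * ‖y‖^2) ≤
        f z - (C + δ)/2 * ‖z‖^2 := by
    intro δ hδ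
    have h := key_lemma n U hUopen hUconv f hf C hsupp δ hδ x y hx hy b ⟨hb, hb1⟩
    rw [real_inner_self_eq_norm_sq, real_inner_self_eq_norm_sq,
      real_inner_self_eq_norm_sq] at h
    rw [hz, ha1]
    exact h
  set K := (a * ‖x‖^2 + b * ‖y‖^2 - ‖z‖^2)/2 with hK
  have hT : ∀ δ : ℝ, 0 < δ →
      a * (f x - C/2 * ‖x‖^2) + b * (f y - C/2 * ‖y‖^2) - (f z - C/2 * ‖z‖^2) ≤ δ * K := by
    intro δ hδ
    have h := hkey δ hδ
    have heq : a * (f x - C/2 * ‖x‖^2) + b * (f y - C/2 * ‖y‖^2) - (f z - C/2 * ‖z‖^2)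
        - δ * K
        = a * (f x - (C + δ)/2 * ‖x‖^2) + b * (f y - (C + δ)/2 * ‖y‖^2)
          - (f z - (C + δ)/2 * ‖z‖^2) := by rw [hK]; ring
    linarith
  by_contra hcon
  push_neg at hcon
  rcases le_or_gt K 0 with hK0 | hK0
  · have := hT 1 one_pos
    linarith
  · set T := a * (f x - C/2 * ‖x‖^2) + b * (f y - C/2 * ‖y‖^2) - (f z - C/2 * ‖z‖^2) with hTd
    have hTpos : 0 < T := by rw [hTd]; linarith
    have h := hT (T/(2*K)) (by positivity)
    have : T/(2*K) * K = T/2 := by field_simp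
    rw [this] at h
    linarith
end
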